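/- Let h: E → ℝ be convex differentiable on a real inner-product space E, with gradient L-smooth, and let x, x̃ ∈ E, and set g = ⟨∇h(x), x − x̃⟩ ≥ 0. For β ∈ [0,1] let x_β = x + β(x̃ − x). If β = min{1, g/(L‖x̃ − x‖²)}, then h(x_β) ≤ h(x) − (1/2)·g²/max{g, L‖x̃ − x‖²}. -/

import Mathlib

/-!
The Lipschitz gradient gives the quadratic upper bound
`h (x + β (x̃ - x)) ≤ h x - (β g - β² s / 2)` with `s = L ‖x̃ - x‖²`. When `g < s` the step
`β = g / s` is the vertex of this parabola and the decrease is `g² / (2 s)`; when `g ≥ s` the step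
is `β = 1` and the decrease `g - s / 2` is at least `g / 2`.
-/

open scoped RealInnerProductSpace

theorem le_add_inner_add_sq_of_lipschitz_gradient {E : Type*} [NormedAddCommGroup E]
    [InnerProductSpace ℝ E] [CompleteSpace E] {h : E → ℝ} {G : E → E} {L : ℝ}
    (hgrad : ∀ y, HasGradientAt h (G y) y) (hLip : ∀ y z, ‖G y - G z‖ ≤ L * ‖y - z‖)
    (x d : E) : h (x + d) ≤ h x + ⟪G x, d⟫ + L / 2 * ‖d‖ ^ 2 := by
  set φ : ℝ → ℝ := fun t => h (x + t • d) - t * ⟪G x, d⟫ - t ^ 2 * (L / 2 * ‖d‖ ^ 2)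
  have hφ' (t : ℝ) :
      HasDerivAt φ (⟪G (x + t • d) - G x, d⟫ - t * (L * ‖d‖ ^ 2)) t := by
    have hline : HasDerivAt (fun t : ℝ => x + t • d) d t := by
      simpa using ((hasDerivAt_id t).smul_const d).const_add x
    have hcomp : HasDerivAt (fun t : ℝ => h (x + t • d)) ⟪G (x + t • d), d⟫ t :=
      (hgrad _).hasFDerivAt.comp_hasDerivAt t hline
    refine ((hcomp.sub ((hasDerivAt_id t).mul_const ⟪G x, d⟫)).sub
      ((hasDerivAt_pow 2 t).mul_const (L / 2 * ‖d‖ ^ 2))).congr_deriv ?_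
    rw [inner_sub_left]
    ring
  have hanti : AntitoneOn φ (Set.Icc 0 1) := by
    refine antitoneOn_of_deriv_nonpos (convex_Icc 0 1)
      (fun t _ => (hφ' t).continuousAt.continuousWithinAt)
      (fun t _ => (hφ' t).differentiableAt.differentiableWithinAt) fun t ht => ?_
    rw [interior_Icc] at ht
    rw [(hφ' t).deriv, sub_nonpos]
    calc ⟪G (x + t • d) - G x, d⟫ ≤ ‖G (x + t • d) - G x‖ * ‖d‖ := real_inner_le_norm _ _
      _ ≤ L * ‖x + t • d - x‖ * ‖d‖ := by gcongr; exact hLip _ _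
      _ = t * (L * ‖d‖ ^ 2) := by
        rw [add_sub_cancel_left, norm_smul, Real.norm_of_nonneg ht.1.le]
        ring
  have h10 : φ 1 ≤ φ 0 := hanti (by norm_num) (by norm_num) zero_le_one
  simp only [φ, one_smul, zero_smul, add_zero] at h10
  linarith

theorem half_sq_div_max_le_min_one_div {g s : ℝ} (hs : 0 < s) :
    (1 / 2) * g ^ 2 / max g s ≤
      min 1 (g / s) * g - min 1 (g / s) ^ 2 * s / 2 := by
  rcases le_or_gt s g with hsg | hgs
  · rw [min_eq_left ((one_le_div hs).mpr hsg), max_eq_left hsg,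
      div_le_iff₀ (hs.trans_le hsg)]
    nlinarith
  · rw [min_eq_right ((div_lt_one hs).mpr hgs).le, max_eq_right hgs.le]
    field_simp
    norm_num

theorem stmt5_general {E : Type*} [NormedAddCommGroup E] [InnerProductSpace ℝ E] [CompleteSpace E]
    (h : E → ℝ) (G : E → E) (L : ℝ) (hL : 0 < L)
    (hgrad : ∀ y, HasGradientAt h (G y) y)
    (hLip : ∀ y z, ‖G y - G z‖ ≤ L * ‖y - z‖)
    (x xt : E) (g : ℝ) (hg : g = ⟪G x, x - xt⟫)
    (β : ℝ) (hβ : β = min 1 (g / (L * ‖xt - x‖ ^ 2))) :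
    h (x + β • (xt - x)) ≤ h x - (1 / 2) * g ^ 2 / max g (L * ‖xt - x‖ ^ 2) := by
  rcases eq_or_ne xt x with rfl | hxt
  · simp [hg]
  have hinner : ⟪G x, xt - x⟫ = -g := by rw [hg, ← inner_neg_right, neg_sub]
  have hquad : h (x + β • (xt - x)) ≤ h x - (β * g - β ^ 2 * (L * ‖xt - x‖ ^ 2) / 2) := by
    have := le_add_inner_add_sq_of_lipschitz_gradient hgrad hLip x (β • (xt - x))
    rw [inner_smul_right, hinner, norm_smul, Real.norm_eq_abs, mul_pow, sq_abs] at this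
    linarith
  have hs : 0 < L * ‖xt - x‖ ^ 2 := by positivity [sub_ne_zero.mpr hxt]
  have := half_sq_div_max_le_min_one_div (g := g) hs
  rw [← hβ] at this
  linarith

/-- Abstract per-iteration decrease of the conditional-gradient (Frank–Wolfe) step. -/
theorem stmt5 {E : Type*} [NormedAddCommGroup E] [InnerProductSpace ℝ E] [CompleteSpace E]
    (h : E → ℝ) (G : E → E) (L : ℝ) (hL : 0 < L)
    (hconv : ConvexOn ℝ Set.univ h)
    (hgrad : ∀ y, HasGradientAt h (G y) y)
    (hLip : ∀ y z, ‖G y - G z‖ ≤ L * ‖y - z‖)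
    (x xt : E) (g : ℝ) (hg : g = ⟪G x, x - xt⟫) (hg0 : 0 ≤ g)
    (β : ℝ) (hβ : β = min 1 (g / (L * ‖xt - x‖ ^ 2))) :
    h (x + β • (xt - x)) ≤ h x - (1 / 2) * g ^ 2 / max g (L * ‖xt - x‖ ^ 2) :=
  stmt5_general h G L hL hgrad hLip x xt g hg β hβ
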